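/- arXiv:1810.07974 — 5 statements merged into one kernel-verified Lean document; each statement's English description precedes it below -/
import Mathlib

section
/- For every continuously differentiable compactly supported function U : ℝ → H with U(t) ∈ D(A) for all t ∈ ℝ, every continuous function W : ℝ → H with W(t) = A(U(t)) for all t, and every a ∈ ℝ, one has ∫_{-∞}^{a} ⟨U(t), M₀ U'(t) + M₁ U(t) + W(t)⟩ e^{-2ρt} dt ≥ c₀ ∫_{-∞}^{a} ‖U(t)‖² e^{-2ρt} dt. -/
/-!
With the weight `e t = exp (-2ρt)`, the function `F = ⟪U, M₀ U⟫ e / 2` has derivative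
`(⟪U, M₀ U'⟫ - ρ ⟪U, M₀ U⟫) e` because `M₀` is symmetric. It vanishes near `-∞` and `F a ≥ 0`
since `M₀ ≥ 0`, so integrating over `(-∞, a]` gives `ρ ∫ ⟪U, M₀ U⟫ e ≤ ∫ ⟪U, M₀ U'⟫ e`.
The time derivative thus supplies the `ρ M₀` term, and integrating the coercivity estimate
pointwise against `e` finishes the proof.
-/

open MeasureTheory
open scoped InnerProductSpace

theorem HasCompactSupport.integrableOn_mul {E : Type*} [NormedAddCommGroup E] {U : ℝ → E}
    (hU : HasCompactSupport U) {f w : ℝ → ℝ} (hf : Continuous f)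
    (h : ∀ t, U t = 0 → f t = 0) (hw : Continuous w) (s : Set ℝ) :
    IntegrableOn (fun t => f t * w t) s := by
  refine ((hf.mul hw).integrable_of_hasCompactSupport ?_).integrableOn
  exact hU.mono fun t ht hUt => ht (by simp [h t hUt])

theorem HasCompactSupport.integrableOn_inner_mul {H : Type*} [NormedAddCommGroup H]
    [InnerProductSpace ℝ H] {U V : ℝ → H} (hU : HasCompactSupport U) (hUc : Continuous U)
    (hV : Continuous V) {w : ℝ → ℝ} (hw : Continuous w) (s : Set ℝ) :
    IntegrableOn (fun t => ⟪U t, V t⟫_ℝ * w t) s :=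
  hU.integrableOn_mul (hUc.inner hV) (fun t hUt => by simp [hUt]) hw s

section WeightedEnergy

variable {H : Type*} [NormedAddCommGroup H] [InnerProductSpace ℝ H]

theorem hasDerivAt_inner_apply_mul_exp {M : H →L[ℝ] H} (hM : (M : H →ₗ[ℝ] H).IsSymmetric)
    {U : ℝ → H} {U' : H} {t : ℝ} (hU : HasDerivAt U U' t) (ρ : ℝ) :
    HasDerivAt (fun s => ⟪U s, M (U s)⟫_ℝ * Real.exp (-2 * ρ * s) / 2)
      ((⟪U t, M U'⟫_ℝ - ρ * ⟪U t, M (U t)⟫_ℝ) * Real.exp (-2 * ρ * t)) t := by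
  have hQ : HasDerivAt (fun s => ⟪U s, M (U s)⟫_ℝ) (2 * ⟪U t, M U'⟫_ℝ) t :=
    (hU.inner ℝ (M.hasFDerivAt.comp_hasDerivAt t hU)).congr_deriv (by
      rw [Function.comp_apply, ← hM.apply_clm U', real_inner_comm (M U')]
      ring)
  have hexp : HasDerivAt (fun s => Real.exp (-2 * ρ * s)) (Real.exp (-2 * ρ * t) * (-2 * ρ)) t :=
    ((hasDerivAt_id t).const_mul (-2 * ρ)).exp.congr_deriv (by simp)
  exact ((hQ.mul hexp).div_const 2).congr_deriv (by ring)

theorem mul_integral_Iic_inner_le_integral_inner_deriv {M : H →L[ℝ] H}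
    (hM : (M : H →ₗ[ℝ] H).IsSymmetric) (hM_nonneg : ∀ x, 0 ≤ ⟪x, M x⟫_ℝ)
    {U : ℝ → H} (hU : ContDiff ℝ 1 U) (hUsupp : HasCompactSupport U) (ρ a : ℝ) :
    ρ * ∫ t in Set.Iic a, ⟪U t, M (U t)⟫_ℝ * Real.exp (-2 * ρ * t) ≤
      ∫ t in Set.Iic a, ⟪U t, M (deriv U t)⟫_ℝ * Real.exp (-2 * ρ * t) := by
  set F : ℝ → ℝ := fun s => ⟪U s, M (U s)⟫_ℝ * Real.exp (-2 * ρ * s) / 2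
  have hUc := hU.continuous
  have hU'c := hU.continuous_deriv le_rfl
  have hexp : Continuous fun t => Real.exp (-2 * ρ * t) := by fun_prop
  have hderiv : deriv F = fun t =>
      (⟪U t, M (deriv U t)⟫_ℝ - ρ * ⟪U t, M (U t)⟫_ℝ) * Real.exp (-2 * ρ * t) := by
    funext t
    exact (hasDerivAt_inner_apply_mul_exp hM
      ((hU.differentiable one_ne_zero t).hasDerivAt) ρ).deriv
  have hF : ContDiff ℝ 1 F :=
    ((hU.inner ℝ (M.contDiff.comp hU)).mul (contDiff_const.mul contDiff_id).exp).div_const 2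
  have hFsupp : HasCompactSupport F := hUsupp.mono fun t ht hUt => ht (by simp [F, hUt])
  have hFa : 0 ≤ F a := by have := hM_nonneg (U a); positivity
  have hint₀ := hUsupp.integrableOn_inner_mul hUc (V := fun t => M (deriv U t)) (by fun_prop)
    hexp (Set.Iic a)
  have hint₁ := hUsupp.integrableOn_inner_mul hUc (V := fun t => M (U t)) (by fun_prop) hexp
    (Set.Iic a)
  have hFTC := hFsupp.integral_Iic_deriv_eq hF a
  simp only [hderiv, sub_mul, mul_assoc ρ] at hFTC
  rw [integral_sub hint₀ (hint₁.const_mul ρ), integral_const_mul] at hFTC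
  linarith

end WeightedEnergy

theorem statement6_general {H : Type*}
    [NormedAddCommGroup H] [InnerProductSpace ℝ H] [CompleteSpace H]
    (M₀ M₁ : H →L[ℝ] H) (hM₀_sa : IsSelfAdjoint M₀)
    (hM₀_nonneg : ∀ x : H, 0 ≤ ⟪x, M₀ x⟫_ℝ)
    (A : H →ₗ.[ℝ] H) (ρ c₀ : ℝ)
    (hcoerc : ∀ w : A.domain,
      c₀ * ‖(w : H)‖ ^ 2 ≤ ⟪(w : H), ρ • M₀ (w : H) + M₁ (w : H) + A w⟫_ℝ)
    (U : ℝ → H) (hU : ContDiff ℝ 1 U) (hUsupp : HasCompactSupport U)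
    (hUdom : ∀ t, U t ∈ A.domain)
    (W : ℝ → H) (hW : Continuous W) (hWA : ∀ t, W t = A ⟨U t, hUdom t⟩)
    (a : ℝ) :
    c₀ * ∫ t in Set.Iic a, ‖U t‖ ^ 2 * Real.exp (-2 * ρ * t) ≤
      ∫ t in Set.Iic a,
        ⟪U t, M₀ (deriv U t) + M₁ (U t) + W t⟫_ℝ * Real.exp (-2 * ρ * t) := by
  set e : ℝ → ℝ := fun t => Real.exp (-2 * ρ * t)
  have he : Continuous e := by fun_prop
  have hUc := hU.continuous
  have hU'c := hU.continuous_deriv le_rfl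
  have hM₀ := hUsupp.integrableOn_inner_mul hUc (V := fun t => M₀ (U t)) (by fun_prop) he
    (Set.Iic a)
  have hM₁W := hUsupp.integrableOn_inner_mul hUc (V := fun t => M₁ (U t) + W t) (by fun_prop) he
    (Set.Iic a)
  have hM₀' := hUsupp.integrableOn_inner_mul hUc (V := fun t => M₀ (deriv U t)) (by fun_prop)
    he (Set.Iic a)
  have hsq := hUsupp.integrableOn_mul (f := fun t => ‖U t‖ ^ 2) (by fun_prop)
    (fun t hUt => by simp [hUt]) he (Set.Iic a)
  have hpointwise (t : ℝ) : c₀ * (‖U t‖ ^ 2 * e t) ≤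
      ρ * (⟪U t, M₀ (U t)⟫_ℝ * e t) + ⟪U t, M₁ (U t) + W t⟫_ℝ * e t := by
    have := mul_le_mul_of_nonneg_right (hcoerc ⟨U t, hUdom t⟩) (Real.exp_pos (-2 * ρ * t)).le
    rw [← hWA t, add_assoc, inner_add_right, inner_smul_right] at this
    linarith
  calc c₀ * ∫ t in Set.Iic a, ‖U t‖ ^ 2 * e t
      ≤ ∫ t in Set.Iic a,
          ρ * (⟪U t, M₀ (U t)⟫_ℝ * e t) + ⟪U t, M₁ (U t) + W t⟫_ℝ * e t := by
        rw [← integral_const_mul]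
        exact integral_mono (hsq.const_mul c₀) ((hM₀.const_mul ρ).add hM₁W) hpointwise
    _ = ρ * (∫ t in Set.Iic a, ⟪U t, M₀ (U t)⟫_ℝ * e t) +
          ∫ t in Set.Iic a, ⟪U t, M₁ (U t) + W t⟫_ℝ * e t := by
        rw [integral_add (hM₀.const_mul ρ) hM₁W, integral_const_mul]
    _ ≤ (∫ t in Set.Iic a, ⟪U t, M₀ (deriv U t)⟫_ℝ * e t) +
          ∫ t in Set.Iic a, ⟪U t, M₁ (U t) + W t⟫_ℝ * e t := by
        gcongr
        exact mul_integral_Iic_inner_le_integral_inner_deriv hM₀_sa.isSymmetric hM₀_nonneg hU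
          hUsupp ρ a
    _ = ∫ t in Set.Iic a, ⟪U t, M₀ (deriv U t) + M₁ (U t) + W t⟫_ℝ * e t := by
        rw [← integral_add hM₀' hM₁W]
        simp only [add_assoc, inner_add_right, add_mul]

theorem statement6 {H : Type*}
    [NormedAddCommGroup H] [InnerProductSpace ℝ H] [CompleteSpace H]
    (M₀ M₁ : H →L[ℝ] H) (hM₀_sa : IsSelfAdjoint M₀)
    (hM₀_nonneg : ∀ x : H, 0 ≤ ⟪x, M₀ x⟫_ℝ)
    (A : H →ₗ.[ℝ] H) (ρ c₀ : ℝ) (hρ : 0 < ρ) (hc₀ : 0 < c₀)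
    (hcoerc : ∀ w : A.domain,
      c₀ * ‖(w : H)‖ ^ 2 ≤ ⟪(w : H), ρ • M₀ (w : H) + M₁ (w : H) + A w⟫_ℝ)
    (U : ℝ → H) (hU : ContDiff ℝ 1 U) (hUsupp : HasCompactSupport U)
    (hUdom : ∀ t, U t ∈ A.domain)
    (W : ℝ → H) (hW : Continuous W) (hWA : ∀ t, W t = A ⟨U t, hUdom t⟩)
    (a : ℝ) :
    c₀ * ∫ t in Set.Iic a, ‖U t‖ ^ 2 * Real.exp (-2 * ρ * t) ≤
      ∫ t in Set.Iic a,
        ⟪U t, M₀ (deriv U t) + M₁ (U t) + W t⟫_ℝ * Real.exp (-2 * ρ * t) :=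
  statement6_general M₀ M₁ hM₀_sa hM₀_nonneg A ρ c₀ hcoerc U hU hUsupp hUdom W hW hWA a
end

section
/- For every continuously differentiable compactly supported function U : ℝ → H with U(t) ∈ D(A) for all t ∈ ℝ, every continuous function W : ℝ → H with W(t) = A(U(t)) for all t, and every a ∈ ℝ, one has the causal a priori estimate c₀ (∫_{-∞}^{a} ‖U(t)‖² e^{-2ρt} dt)^{1/2} ≤ (∫_{-∞}^{a} ‖M₀ U'(t) + M₁ U(t) + W(t)‖² e^{-2ρt} dt)^{1/2}. -/
/-!
Weighted energy estimate. Pair the equation `M₀ U' + M₁ U + A U = F` with `U` and use the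
coercivity of `ρ M₀ + M₁ + A`: since `M₀` is selfadjoint, the term `⟪U', M₀ U⟫ - ρ ⟪U, M₀ U⟫`
is half the derivative of the energy `e^{-2ρt} ⟪U, M₀ U⟫` divided by `e^{-2ρt}`. After the
weighted Young inequality `2 c₀ ⟪U, F⟫ ≤ c₀² ‖U‖² + ‖F‖²`, integrating over `(-∞, a]` gives
`c₀² ∫ ‖U‖² e^{-2ρt} + c₀ e^{-2ρa} ⟪U a, M₀ U a⟫ ≤ ∫ ‖F‖² e^{-2ρt}`, and the energy at
time `a` is nonnegative because `M₀` is.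
-/

open MeasureTheory Set Filter Topology
open scoped InnerProductSpace

section Energy

variable {H : Type*} [NormedAddCommGroup H] [InnerProductSpace ℝ H] [CompleteSpace H]

theorem IsSelfAdjoint.real_inner_apply_comm {M : H →L[ℝ] H} (hM : IsSelfAdjoint M) (x y : H) :
    ⟪x, M y⟫_ℝ = ⟪y, M x⟫_ℝ :=
  (real_inner_comm (M y) x).trans (hM.isSymmetric y x)

theorem HasDerivAt.inner_apply_self {M : H →L[ℝ] H} (hM : IsSelfAdjoint M) {U : ℝ → H}
    {U' : H} {t : ℝ} (hU : HasDerivAt U U' t) :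
    HasDerivAt (fun s => ⟪U s, M (U s)⟫_ℝ) (2 * ⟪U', M (U t)⟫_ℝ) t := by
  have hMU : HasDerivAt (fun s => M (U s)) (M U') t := M.hasFDerivAt.comp_hasDerivAt t hU
  refine (hU.inner ℝ hMU).congr_deriv ?_
  rw [hM.real_inner_apply_comm, two_mul]

theorem HasDerivAt.exp_mul_inner_apply_self {M : H →L[ℝ] H} (hM : IsSelfAdjoint M)
    (ρ : ℝ) {U : ℝ → H} {U' : H} {t : ℝ} (hU : HasDerivAt U U' t) :
    HasDerivAt (fun s => Real.exp (-2 * ρ * s) * ⟪U s, M (U s)⟫_ℝ)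
      (Real.exp (-2 * ρ * t) * (2 * (⟪U', M (U t)⟫_ℝ - ρ * ⟪U t, M (U t)⟫_ℝ))) t := by
  have hexp : HasDerivAt (fun s => Real.exp (-2 * ρ * s)) (Real.exp (-2 * ρ * t) * (-2 * ρ)) t :=
    ((hasDerivAt_id t).const_mul (-2 * ρ)).exp.congr_deriv (by simp)
  refine (hexp.mul (hU.inner_apply_self hM)).congr_deriv ?_
  ring

theorem sq_mul_norm_sq_add_le_norm_sq_of_coercive {M₀ M₁ : H →L[ℝ] H} (hM₀ : IsSelfAdjoint M₀)
    {A : H →ₗ.[ℝ] H} {ρ c₀ : ℝ} (hc₀ : 0 ≤ c₀)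
    (hcoerc : ∀ w : A.domain,
      c₀ * ‖(w : H)‖ ^ 2 ≤ ⟪(w : H), ρ • M₀ (w : H) + M₁ (w : H) + A w⟫_ℝ)
    (u : A.domain) (v : H) :
    c₀ ^ 2 * ‖(u : H)‖ ^ 2 + 2 * c₀ * (⟪v, M₀ u⟫_ℝ - ρ * ⟪(u : H), M₀ u⟫_ℝ) ≤
      ‖M₀ v + M₁ u + A u‖ ^ 2 := by
  set f := M₀ v + M₁ u + A u
  have hpair : c₀ * ‖(u : H)‖ ^ 2 + (⟪v, M₀ u⟫_ℝ - ρ * ⟪(u : H), M₀ u⟫_ℝ) ≤ ⟪(u : H), f⟫_ℝ := by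
    have := hcoerc u
    simp only [f, inner_add_right, real_inner_smul_right, hM₀.real_inner_apply_comm (u : H) v]
      at this ⊢
    linarith
  have hyoung : 2 * c₀ * ⟪(u : H), f⟫_ℝ ≤ c₀ ^ 2 * ‖(u : H)‖ ^ 2 + ‖f‖ ^ 2 := by
    nlinarith [mul_le_mul_of_nonneg_left (real_inner_le_norm (u : H) f) hc₀,
      sq_nonneg (c₀ * ‖(u : H)‖ - ‖f‖)]
  nlinarith [mul_le_mul_of_nonneg_left hpair hc₀]

end Energy

theorem setIntegral_Iic_le_of_le_add_deriv {f h g g' : ℝ → ℝ} {a : ℝ}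
    (hf : IntegrableOn f (Iic a)) (hh : IntegrableOn h (Iic a))
    (hg : ∀ t, HasDerivAt g (g' t) t) (hg' : IntegrableOn g' (Iic a))
    (hg_atBot : Tendsto g atBot (𝓝 0)) (hga : 0 ≤ g a) (hle : ∀ t, f t + g' t ≤ h t) :
    ∫ t in Iic a, f t ≤ ∫ t in Iic a, h t := by
  have hftc := integral_Iic_of_hasDerivAt_of_tendsto' (fun t _ => hg t) hg' hg_atBot
  have hmono : ∫ t in Iic a, (f t + g' t) ≤ ∫ t in Iic a, h t :=
    setIntegral_mono_on (hf.add hg') hh measurableSet_Iic fun t _ => hle t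
  rw [integral_add hf hg'] at hmono
  linarith

theorem LinearPMap.hasCompactSupport_of_eq_apply {H : Type*} [NormedAddCommGroup H]
    [NormedSpace ℝ H] (A : H →ₗ.[ℝ] H) {U W : ℝ → H} (hUsupp : HasCompactSupport U)
    (hUdom : ∀ t, U t ∈ A.domain) (hWA : ∀ t, W t = A ⟨U t, hUdom t⟩) :
    HasCompactSupport W :=
  hUsupp.mono fun t hWt hUt => hWt <| by
    rw [hWA, show (⟨U t, hUdom t⟩ : A.domain) = 0 from Subtype.ext hUt, A.map_zero]

theorem sq_mul_setIntegral_Iic_le_of_coercive {H : Type*}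
    [NormedAddCommGroup H] [InnerProductSpace ℝ H] [CompleteSpace H]
    {M₀ M₁ : H →L[ℝ] H} (hM₀_sa : IsSelfAdjoint M₀) (hM₀_nonneg : ∀ x : H, 0 ≤ ⟪x, M₀ x⟫_ℝ)
    {A : H →ₗ.[ℝ] H} {ρ c₀ : ℝ} (hc₀ : 0 ≤ c₀)
    (hcoerc : ∀ w : A.domain,
      c₀ * ‖(w : H)‖ ^ 2 ≤ ⟪(w : H), ρ • M₀ (w : H) + M₁ (w : H) + A w⟫_ℝ)
    {U : ℝ → H} (hU : ContDiff ℝ 1 U) (hUsupp : HasCompactSupport U)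
    (hUdom : ∀ t, U t ∈ A.domain)
    {W : ℝ → H} (hW : Continuous W) (hWA : ∀ t, W t = A ⟨U t, hUdom t⟩) (a : ℝ) :
    c₀ ^ 2 * ∫ t in Iic a, ‖U t‖ ^ 2 * Real.exp (-2 * ρ * t) ≤
      ∫ t in Iic a, ‖M₀ (deriv U t) + M₁ (U t) + W t‖ ^ 2 * Real.exp (-2 * ρ * t) := by
  have hUc : Continuous U := hU.continuous
  have hU'c : Continuous (deriv U) := hU.continuous_deriv le_rfl
  set E := fun t : ℝ => Real.exp (-2 * ρ * t)
  set F := fun t => M₀ (deriv U t) + M₁ (U t) + W t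
  set energy := fun t => c₀ * (E t * ⟪U t, M₀ (U t)⟫_ℝ)
  set dissipation := fun t =>
    c₀ * (E t * (2 * (⟪deriv U t, M₀ (U t)⟫_ℝ - ρ * ⟪U t, M₀ (U t)⟫_ℝ)))
  have hFsupp : HasCompactSupport F :=
    ((hUsupp.deriv.comp_left M₀.map_zero).add (hUsupp.comp_left M₁.map_zero)).add
      (A.hasCompactSupport_of_eq_apply hUsupp hUdom hWA)
  have hvanish : ∀ f : ℝ → ℝ, (∀ t, U t = 0 → f t = 0) → HasCompactSupport f :=
    fun f hf => hUsupp.mono fun t hft hUt => hft (hf t hUt)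
  have hint : ∀ f : ℝ → ℝ, Continuous f → HasCompactSupport f → IntegrableOn f (Iic a) :=
    fun f hf hfsupp => (hf.integrable_of_hasCompactSupport hfsupp).integrableOn
  have hpointwise : ∀ t, c₀ ^ 2 * (‖U t‖ ^ 2 * E t) + dissipation t ≤ ‖F t‖ ^ 2 * E t := by
    intro t
    have h := sq_mul_norm_sq_add_le_norm_sq_of_coercive hM₀_sa hc₀ hcoerc
      ⟨U t, hUdom t⟩ (deriv U t)
    rw [← hWA] at h
    have := mul_le_mul_of_nonneg_right h (Real.exp_pos (-2 * ρ * t)).le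
    linarith
  rw [← integral_const_mul]
  exact setIntegral_Iic_le_of_le_add_deriv
    (hint _ (by fun_prop) (hvanish _ fun t ht => by simp [ht]))
    (hint _ (by fun_prop) (hFsupp.norm.comp_left (g := fun x : ℝ => x ^ 2) (by simp)).mul_right)
    (fun t => ((hU.differentiable one_ne_zero t).hasDerivAt.exp_mul_inner_apply_self
      hM₀_sa ρ).const_mul c₀)
    (hint dissipation (by fun_prop) (hvanish _ fun t ht => by simp [dissipation, ht]))
    ((hvanish energy fun t ht => by simp [energy, ht]).is_zero_at_infty.mono_left
      atBot_le_cocompact)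
    (mul_nonneg hc₀ (mul_nonneg (Real.exp_pos _).le (hM₀_nonneg _))) hpointwise

theorem statement7_general {H : Type*}
    [NormedAddCommGroup H] [InnerProductSpace ℝ H] [CompleteSpace H]
    (M₀ M₁ : H →L[ℝ] H) (hM₀_sa : IsSelfAdjoint M₀)
    (hM₀_nonneg : ∀ x : H, 0 ≤ ⟪x, M₀ x⟫_ℝ)
    (A : H →ₗ.[ℝ] H) (ρ c₀ : ℝ) (hc₀ : 0 < c₀)
    (hcoerc : ∀ w : A.domain,
      c₀ * ‖(w : H)‖ ^ 2 ≤ ⟪(w : H), ρ • M₀ (w : H) + M₁ (w : H) + A w⟫_ℝ)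
    (U : ℝ → H) (hU : ContDiff ℝ 1 U) (hUsupp : HasCompactSupport U)
    (hUdom : ∀ t, U t ∈ A.domain)
    (W : ℝ → H) (hW : Continuous W) (hWA : ∀ t, W t = A ⟨U t, hUdom t⟩)
    (a : ℝ) :
    c₀ * Real.sqrt (∫ t in Set.Iic a, ‖U t‖ ^ 2 * Real.exp (-2 * ρ * t)) ≤
      Real.sqrt (∫ t in Set.Iic a,
        ‖M₀ (deriv U t) + M₁ (U t) + W t‖ ^ 2 * Real.exp (-2 * ρ * t)) := by
  calc c₀ * Real.sqrt (∫ t in Iic a, ‖U t‖ ^ 2 * Real.exp (-2 * ρ * t))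
      = Real.sqrt (c₀ ^ 2 * ∫ t in Iic a, ‖U t‖ ^ 2 * Real.exp (-2 * ρ * t)) := by
        rw [Real.sqrt_mul (sq_nonneg c₀), Real.sqrt_sq hc₀.le]
    _ ≤ _ := Real.sqrt_le_sqrt <|
        sq_mul_setIntegral_Iic_le_of_coercive hM₀_sa hM₀_nonneg hc₀.le hcoerc hU hUsupp hUdom
          hW hWA a

theorem statement7 {H : Type*}
    [NormedAddCommGroup H] [InnerProductSpace ℝ H] [CompleteSpace H]
    (M₀ M₁ : H →L[ℝ] H) (hM₀_sa : IsSelfAdjoint M₀)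
    (hM₀_nonneg : ∀ x : H, 0 ≤ ⟪x, M₀ x⟫_ℝ)
    (A : H →ₗ.[ℝ] H) (ρ c₀ : ℝ) (hρ : 0 < ρ) (hc₀ : 0 < c₀)
    (hcoerc : ∀ w : A.domain,
      c₀ * ‖(w : H)‖ ^ 2 ≤ ⟪(w : H), ρ • M₀ (w : H) + M₁ (w : H) + A w⟫_ℝ)
    (U : ℝ → H) (hU : ContDiff ℝ 1 U) (hUsupp : HasCompactSupport U)
    (hUdom : ∀ t, U t ∈ A.domain)
    (W : ℝ → H) (hW : Continuous W) (hWA : ∀ t, W t = A ⟨U t, hUdom t⟩)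
    (a : ℝ) :
    c₀ * Real.sqrt (∫ t in Set.Iic a, ‖U t‖ ^ 2 * Real.exp (-2 * ρ * t)) ≤
      Real.sqrt (∫ t in Set.Iic a,
        ‖M₀ (deriv U t) + M₁ (U t) + W t‖ ^ 2 * Real.exp (-2 * ρ * t)) :=
  statement7_general M₀ M₁ hM₀_sa hM₀_nonneg A ρ c₀ hc₀ hcoerc U hU hUsupp hUdom W hW hWA a
end

section
/- Let ρ ≥ 1. For every continuously differentiable compactly supported function U : ℝ → H with U(t) ∈ D(C) for all t ∈ ℝ, every continuous function V : ℝ → X with V(t) = C(U(t)) and V(t) ∈ D(C^*) for all t, every continuous function W : ℝ → H with W(t) = C^*(V(t)) for all t, and every a ∈ ℝ, one has ∫_{-∞}^{a} ⟨U(t), η U'(t) + W(t)⟩ e^{-2ρt} dt ≥ (min{1, c₁}/2) ∫_{-∞}^{a} (‖U(t)‖² + ‖V(t)‖²) e^{-2ρt} dt. -/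
/-!
Since `W = C* C U`, the term `⟪U, W⟫` equals `‖V‖²`. Since `η` is symmetric, `⟪U, η U'⟫` is half
the derivative of `⟪U, η U⟫`, so integrating by parts against `e^{-2ρt}` turns its integral into a
nonnegative boundary term at `a` plus `ρ ∫ ⟪U, η U⟫ e^{-2ρt}`. The claim then follows pointwise
from coercivity, `ρ ≥ 1` and `η ≥ 0`.
-/

open MeasureTheory LinearPMap Set Real
open scoped InnerProductSpace

theorem Continuous.integrableOn_of_eq_zero_of_hasCompactSupport {α E F : Type*}
    [TopologicalSpace α] [MeasurableSpace α] [OpensMeasurableSpace α] {μ : Measure α}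
    [IsFiniteMeasureOnCompacts μ] [NormedAddCommGroup E] [Zero F] {f : α → E} {g : α → F}
    (hf : Continuous f) (hg : HasCompactSupport g) (hfg : ∀ x, g x = 0 → f x = 0) (s : Set α) :
    IntegrableOn f s μ :=
  (hf.integrable_of_hasCompactSupport <| hg.mono <|
    Function.support_subset_iff'.2 fun x hx => hfg x (Function.notMem_support.1 hx)).integrableOn

theorem LinearPMap.inner_adjoint_apply_eq_norm_sq {𝕜 E F : Type*} [RCLike 𝕜]
    [NormedAddCommGroup E] [InnerProductSpace 𝕜 E] [CompleteSpace E]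
    [NormedAddCommGroup F] [InnerProductSpace 𝕜 F]
    {T : E →ₗ.[𝕜] F} (hT : Dense (T.domain : Set E)) (x : T.domain) (y : T†.domain)
    (hy : (y : F) = T x) :
    ⟪(x : E), T† y⟫_𝕜 = (‖T x‖ : 𝕜) ^ 2 := by
  rw [← inner_conj_symm, adjoint_isFormalAdjoint hT, hy, inner_conj_symm,
    inner_self_eq_norm_sq_to_K]

theorem integral_Iic_deriv_mul_exp {f : ℝ → ℝ} (hf : ContDiff ℝ 1 f) (hsupp : HasCompactSupport f)
    (c a : ℝ) :
    ∫ t in Iic a, deriv f t * exp (c * t) =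
      f a * exp (c * a) - c * ∫ t in Iic a, f t * exp (c * t) := by
  have hexp : ∀ t, HasDerivAt (fun s => exp (c * s)) (c * exp (c * t)) t := fun t => by
    simpa [mul_comm] using ((hasDerivAt_id t).const_mul c).exp
  have hcont : Continuous fun t => f t * exp (c * t) := by fun_prop
  have hsupp' : HasCompactSupport fun t => f t * exp (c * t) := hsupp.mul_right
  have ibp := integral_Iic_mul_deriv_eq_deriv_mul (a := a) (u := f) (u' := deriv f)
    (fun t _ => (hf.differentiable one_ne_zero t).hasDerivAt) (fun t _ => hexp t)
    ((by fun_prop : Continuous fun t => f t * (c * exp (c * t))).integrable_of_hasCompactSupport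
      hsupp.mul_right).integrableOn
    (((hf.continuous_deriv le_rfl).mul (by fun_prop)).integrable_of_hasCompactSupport
      hsupp.deriv.mul_right).integrableOn
    (hcont.continuousAt.tendsto.mono_left nhdsWithin_le_nhds)
    (hsupp'.is_zero_at_infty.mono_left atBot_le_cocompact)
  simp only [mul_left_comm _ c, integral_const_mul, sub_zero] at ibp
  linarith

theorem LinearMap.IsSymmetric.hasDerivAt_inner_apply_self {H : Type*} [NormedAddCommGroup H]
    [InnerProductSpace ℝ H] {η : H →L[ℝ] H} (hη : (η : H →ₗ[ℝ] H).IsSymmetric) {u : ℝ → H}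
    {u' : H} {t : ℝ} (hu : HasDerivAt u u' t) :
    HasDerivAt (fun s => ⟪u s, η (u s)⟫_ℝ) (2 * ⟪u t, η u'⟫_ℝ) t := by
  have hsymm : ⟪u', η (u t)⟫_ℝ = ⟪u t, η u'⟫_ℝ := by
    rw [real_inner_comm]; exact hη (u t) u'
  refine (hu.inner ℝ (η.hasFDerivAt.comp_hasDerivAt t hu)).congr_deriv ?_
  rw [Function.comp_apply, hsymm]; ring

theorem half_min_one_mul_add_le {c p u v ρ : ℝ} (hu : 0 ≤ u) (hv : 0 ≤ v) (hp : 0 ≤ p)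
    (hρ : 1 ≤ ρ) (h : c * u ≤ p + v) : min 1 c / 2 * (u + v) ≤ ρ * p + v := by
  nlinarith [mul_le_mul_of_nonneg_right (min_le_right 1 c) hu,
    mul_le_mul_of_nonneg_right (min_le_left 1 c) hv]

theorem integral_Iic_inner_apply_deriv_mul_exp {H : Type*} [NormedAddCommGroup H]
    [InnerProductSpace ℝ H] {η : H →L[ℝ] H} (hη : (η : H →ₗ[ℝ] H).IsSymmetric) {U : ℝ → H}
    (hU : ContDiff ℝ 1 U) (hUsupp : HasCompactSupport U) (c a : ℝ) :
    ∫ t in Iic a, ⟪U t, η (deriv U t)⟫_ℝ * exp (c * t) =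
      (⟪U a, η (U a)⟫_ℝ * exp (c * a) - c * ∫ t in Iic a, ⟪U t, η (U t)⟫_ℝ * exp (c * t)) / 2 := by
  have hφ : ContDiff ℝ 1 fun t => ⟪U t, η (U t)⟫_ℝ := hU.inner ℝ (η.contDiff.comp hU)
  have hφsupp : HasCompactSupport fun t => ⟪U t, η (U t)⟫_ℝ :=
    hUsupp.mono <| Function.support_subset_iff'.2 fun t ht => by
      simp [Function.notMem_support.1 ht]
  have hderiv : deriv (fun t => ⟪U t, η (U t)⟫_ℝ) = fun t => 2 * ⟪U t, η (deriv U t)⟫_ℝ :=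
    funext fun t =>
      (hη.hasDerivAt_inner_apply_self (hU.differentiable one_ne_zero t).hasDerivAt).deriv
  have h := integral_Iic_deriv_mul_exp hφ hφsupp c a
  simp only [hderiv, mul_assoc, integral_const_mul] at h
  linarith

theorem statement8_general {H X : Type*}
    [NormedAddCommGroup H] [InnerProductSpace ℝ H] [CompleteSpace H]
    [NormedAddCommGroup X] [InnerProductSpace ℝ X]
    (η : H →L[ℝ] H) (hη_sa : IsSelfAdjoint η) (hη_nonneg : ∀ x : H, 0 ≤ ⟪x, η x⟫_ℝ)
    (C : H →ₗ.[ℝ] X) (hC_dense : Dense (C.domain : Set H))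
    (c₁ : ℝ)
    (hcoerc : ∀ u : C.domain, c₁ * ‖(u : H)‖ ^ 2 ≤ ⟪(u : H), η (u : H)⟫_ℝ + ‖C u‖ ^ 2)
    (ρ : ℝ) (hρ : 1 ≤ ρ)
    (U : ℝ → H) (hU : ContDiff ℝ 1 U) (hUsupp : HasCompactSupport U)
    (hUdom : ∀ t, U t ∈ C.domain)
    (V : ℝ → X) (hVcont : Continuous V) (hVC : ∀ t, V t = C ⟨U t, hUdom t⟩)
    (hVdom : ∀ t, V t ∈ C.adjoint.domain)
    (W : ℝ → H) (hWC : ∀ t, W t = C.adjoint ⟨V t, hVdom t⟩)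
    (a : ℝ) :
    min 1 c₁ / 2 *
        ∫ t in Set.Iic a, (‖U t‖ ^ 2 + ‖V t‖ ^ 2) * Real.exp (-2 * ρ * t) ≤
      ∫ t in Set.Iic a, ⟪U t, η (deriv U t) + W t⟫_ℝ * Real.exp (-2 * ρ * t) := by
  have hUcont : Continuous U := hU.continuous
  have hU'cont : Continuous (deriv U) := hU.continuous_deriv le_rfl
  have hV : ∀ t, U t = 0 → V t = 0 := fun t ht => by
    rw [hVC, show (⟨U t, hUdom t⟩ : C.domain) = 0 from Subtype.ext ht, C.map_zero]
  have hint {f : ℝ → ℝ} (hf : Continuous f) (hf0 : ∀ t, U t = 0 → f t = 0) :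
      IntegrableOn f (Iic a) := hf.integrableOn_of_eq_zero_of_hasCompactSupport hUsupp hf0 _
  have hUW : ∀ t, ⟪U t, W t⟫_ℝ = ‖V t‖ ^ 2 := fun t => by
    have h := inner_adjoint_apply_eq_norm_sq hC_dense ⟨U t, hUdom t⟩ ⟨V t, hVdom t⟩ (hVC t)
    rwa [← hVC, ← hWC] at h
  have hφe : IntegrableOn (fun t => ⟪U t, η (U t)⟫_ℝ * exp (-2 * ρ * t)) (Iic a) :=
    hint (by fun_prop) fun t ht => by simp [ht]
  have hVe : IntegrableOn (fun t => ‖V t‖ ^ 2 * exp (-2 * ρ * t)) (Iic a) :=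
    hint (by fun_prop) fun t ht => by simp [hV t ht]
  calc min 1 c₁ / 2 * ∫ t in Iic a, (‖U t‖ ^ 2 + ‖V t‖ ^ 2) * exp (-2 * ρ * t)
      ≤ ∫ t in Iic a, (ρ * ⟪U t, η (U t)⟫_ℝ + ‖V t‖ ^ 2) * exp (-2 * ρ * t) := by
        rw [← integral_const_mul]
        refine integral_mono ((hint (by fun_prop) fun t ht => by simp [ht, hV t ht]).const_mul _)
          (hint (by fun_prop) fun t ht => by simp [ht, hV t ht]) fun t => ?_
        have h := hcoerc ⟨U t, hUdom t⟩
        rw [← hVC] at h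
        rw [← mul_assoc]
        gcongr
        exact half_min_one_mul_add_le (by positivity) (by positivity) (hη_nonneg _) hρ h
    _ = ρ * (∫ t in Iic a, ⟪U t, η (U t)⟫_ℝ * exp (-2 * ρ * t)) +
          ∫ t in Iic a, ‖V t‖ ^ 2 * exp (-2 * ρ * t) := by
        simp only [add_mul, mul_assoc ρ]
        rw [integral_add (hφe.const_mul ρ) hVe, integral_const_mul]
    _ ≤ (⟪U a, η (U a)⟫_ℝ * exp (-2 * ρ * a) -
          -2 * ρ * ∫ t in Iic a, ⟪U t, η (U t)⟫_ℝ * exp (-2 * ρ * t)) / 2 +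
          ∫ t in Iic a, ‖V t‖ ^ 2 * exp (-2 * ρ * t) := by
        have := mul_nonneg (hη_nonneg (U a)) (exp_pos (-2 * ρ * a)).le
        linarith
    _ = ∫ t in Iic a, ⟪U t, η (deriv U t) + W t⟫_ℝ * exp (-2 * ρ * t) := by
        rw [← integral_Iic_inner_apply_deriv_mul_exp hη_sa.isSymmetric hU hUsupp,
          ← integral_add (hint (by fun_prop) fun t ht => by simp [ht]) hVe]
        simp only [inner_add_right, hUW, add_mul]

theorem statement8 {H X : Type*}
    [NormedAddCommGroup H] [InnerProductSpace ℝ H] [CompleteSpace H]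
    [NormedAddCommGroup X] [InnerProductSpace ℝ X] [CompleteSpace X]
    (η : H →L[ℝ] H) (hη_sa : IsSelfAdjoint η) (hη_nonneg : ∀ x : H, 0 ≤ ⟪x, η x⟫_ℝ)
    (C : H →ₗ.[ℝ] X) (hC_dense : Dense (C.domain : Set H)) (hC_closed : C.IsClosed)
    (c₁ : ℝ) (hc₁ : 0 < c₁)
    (hcoerc : ∀ u : C.domain, c₁ * ‖(u : H)‖ ^ 2 ≤ ⟪(u : H), η (u : H)⟫_ℝ + ‖C u‖ ^ 2)
    (ρ : ℝ) (hρ : 1 ≤ ρ)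
    (U : ℝ → H) (hU : ContDiff ℝ 1 U) (hUsupp : HasCompactSupport U)
    (hUdom : ∀ t, U t ∈ C.domain)
    (V : ℝ → X) (hVcont : Continuous V) (hVC : ∀ t, V t = C ⟨U t, hUdom t⟩)
    (hVdom : ∀ t, V t ∈ C.adjoint.domain)
    (W : ℝ → H) (hWcont : Continuous W) (hWC : ∀ t, W t = C.adjoint ⟨V t, hVdom t⟩)
    (a : ℝ) :
    min 1 c₁ / 2 *
        ∫ t in Set.Iic a, (‖U t‖ ^ 2 + ‖V t‖ ^ 2) * Real.exp (-2 * ρ * t) ≤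
      ∫ t in Set.Iic a, ⟪U t, η (deriv U t) + W t⟫_ℝ * Real.exp (-2 * ρ * t) :=
  statement8_general η hη_sa hη_nonneg C hC_dense c₁ hcoerc ρ hρ U hU hUsupp hUdom V hVcont hVC
    hVdom W hWC a
end

section
/- Suppose U : ℝ → H is continuously differentiable on an interval [T₀, T₁] (T₀ ≤ T₁) with U(t) ∈ D(C) for all t ∈ [T₀, T₁], V : ℝ → X is continuous on [T₀, T₁] with V(t) = C(U(t)) and V(t) ∈ D(C^*) for all t ∈ [T₀, T₁], W : ℝ → H is continuous on [T₀, T₁] with W(t) = C^*(V(t)) for all t ∈ [T₀, T₁], and the homogeneous equation η U'(t) + W(t) = 0 holds for all t ∈ [T₀, T₁]. Then the energy balance law (1/2) ⟨U(T₁), η U(T₁)⟩ + ∫_{T₀}^{T₁} ‖V(t)‖² dt = (1/2) ⟨U(T₀), η U(T₀)⟩ holds. -/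
open MeasureTheory LinearPMap Set
open scoped InnerProductSpace

/-!
Along the solution, `t ↦ ⟪U t, η (U t)⟫` has derivative `2 ⟪η (U' t), U t⟫ = -2 ⟪C^* (C U t), U t⟫
= -2 ‖V t‖²`, by the symmetry of `η`, the equation `η U' = -W` and the defining identity of the
adjoint. Integrating over `[T₀, T₁]` gives the balance law.
-/

theorem HasDerivWithinAt.inner_apply_self {E : Type*} [NormedAddCommGroup E]
    [InnerProductSpace ℝ E] {A : E →L[ℝ] E} (hA : (A : E →ₗ[ℝ] E).IsSymmetric)
    {u : ℝ → E} {u' : E} {s : Set ℝ} {t : ℝ} (hu : HasDerivWithinAt u u' s t) :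
    HasDerivWithinAt (fun τ => ⟪u τ, A (u τ)⟫_ℝ) (2 * ⟪A u', u t⟫_ℝ) s t := by
  have hAu : HasDerivWithinAt (fun τ => A (u τ)) (A u') s t :=
    A.hasFDerivAt.comp_hasDerivWithinAt t hu
  refine (hu.inner ℝ hAu).congr_deriv ?_
  have hsymm : ⟪A u', u t⟫_ℝ = ⟪u', A (u t)⟫_ℝ := hA u' (u t)
  rw [← hsymm, real_inner_comm (A u')]
  ring

theorem LinearPMap.inner_adjoint_apply_self {E F : Type*} [NormedAddCommGroup E]
    [InnerProductSpace ℝ E] [CompleteSpace E] [NormedAddCommGroup F] [InnerProductSpace ℝ F]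
    {T : E →ₗ.[ℝ] F} (hT : Dense (T.domain : Set E)) (x : T.domain) (hx : T x ∈ T†.domain) :
    ⟪T† ⟨T x, hx⟩, x⟫_ℝ = ‖T x‖ ^ 2 := by
  rw [adjoint_isFormalAdjoint hT, real_inner_self_eq_norm_sq]

theorem intervalIntegral.integral_eq_sub_of_hasDerivWithinAt_Icc {E : Type*}
    [NormedAddCommGroup E] [NormedSpace ℝ E] [CompleteSpace E] {f f' : ℝ → E} {a b : ℝ}
    (hab : a ≤ b) (hderiv : ∀ t ∈ Icc a b, HasDerivWithinAt f (f' t) (Icc a b) t)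
    (hint : IntervalIntegrable f' volume a b) :
    ∫ t in a..b, f' t = f b - f a :=
  integral_eq_sub_of_hasDerivAt_of_le hab
    (fun t ht => (hderiv t ht).continuousWithinAt)
    (fun t ht => (hderiv t (Ioo_subset_Icc_self ht)).hasDerivAt (Icc_mem_nhds ht.1 ht.2)) hint

theorem statement9_general {H X : Type*}
    [NormedAddCommGroup H] [InnerProductSpace ℝ H] [CompleteSpace H]
    [NormedAddCommGroup X] [InnerProductSpace ℝ X]
    (η : H →L[ℝ] H) (hη_sa : IsSelfAdjoint η)
    (C : H →ₗ.[ℝ] X) (hC_dense : Dense (C.domain : Set H))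
    (T₀ T₁ : ℝ) (hT : T₀ ≤ T₁)
    (U U' : ℝ → H)
    (hUderiv : ∀ t ∈ Set.Icc T₀ T₁, HasDerivWithinAt U (U' t) (Set.Icc T₀ T₁) t)
    (hUdom : ∀ t ∈ Set.Icc T₀ T₁, U t ∈ C.domain)
    (V : ℝ → X) (hVcont : ContinuousOn V (Set.Icc T₀ T₁))
    (hVC : ∀ t, ∀ ht : t ∈ Set.Icc T₀ T₁, V t = C ⟨U t, hUdom t ht⟩)
    (hVdom : ∀ t ∈ Set.Icc T₀ T₁, V t ∈ C.adjoint.domain)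
    (W : ℝ → H)
    (hWC : ∀ t, ∀ ht : t ∈ Set.Icc T₀ T₁, W t = C.adjoint ⟨V t, hVdom t ht⟩)
    (heq : ∀ t ∈ Set.Icc T₀ T₁, η (U' t) + W t = 0) :
    1 / 2 * ⟪U T₁, η (U T₁)⟫_ℝ + ∫ t in T₀..T₁, ‖V t‖ ^ 2 =
      1 / 2 * ⟪U T₀, η (U T₀)⟫_ℝ := by
  have hdissipation : ∀ t ∈ Icc T₀ T₁, ⟪η (U' t), U t⟫_ℝ = -‖V t‖ ^ 2 := by
    intro t ht
    have hW : W t = C† ⟨C ⟨U t, hUdom t ht⟩, hVC t ht ▸ hVdom t ht⟩ := by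
      rw [hWC t ht]
      congr 2
      exact hVC t ht
    rw [eq_neg_of_add_eq_zero_left (heq t ht), inner_neg_left, hW,
      inner_adjoint_apply_self hC_dense, hVC t ht]
  have henergy : ∀ t ∈ Icc T₀ T₁, HasDerivWithinAt (fun τ => ⟪U τ, η (U τ)⟫_ℝ)
      (-2 * ‖V t‖ ^ 2) (Icc T₀ T₁) t := fun t ht => by
    convert (hUderiv t ht).inner_apply_self hη_sa.isSymmetric using 1
    rw [hdissipation t ht]
    ring
  have hint : IntervalIntegrable (fun t => -2 * ‖V t‖ ^ 2) volume T₀ T₁ :=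
    ((hVcont.norm.pow 2).const_smul (-2 : ℝ)).intervalIntegrable_of_Icc hT
  have hFTC := intervalIntegral.integral_eq_sub_of_hasDerivWithinAt_Icc hT henergy hint
  rw [intervalIntegral.integral_const_mul] at hFTC
  linarith

theorem statement9 {H X : Type*}
    [NormedAddCommGroup H] [InnerProductSpace ℝ H] [CompleteSpace H]
    [NormedAddCommGroup X] [InnerProductSpace ℝ X] [CompleteSpace X]
    (η : H →L[ℝ] H) (hη_sa : IsSelfAdjoint η) (hη_nonneg : ∀ x : H, 0 ≤ ⟪x, η x⟫_ℝ)
    (C : H →ₗ.[ℝ] X) (hC_dense : Dense (C.domain : Set H)) (hC_closed : C.IsClosed)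
    (T₀ T₁ : ℝ) (hT : T₀ ≤ T₁)
    (U U' : ℝ → H)
    (hUderiv : ∀ t ∈ Set.Icc T₀ T₁, HasDerivWithinAt U (U' t) (Set.Icc T₀ T₁) t)
    (hU'cont : ContinuousOn U' (Set.Icc T₀ T₁))
    (hUdom : ∀ t ∈ Set.Icc T₀ T₁, U t ∈ C.domain)
    (V : ℝ → X) (hVcont : ContinuousOn V (Set.Icc T₀ T₁))
    (hVC : ∀ t, ∀ ht : t ∈ Set.Icc T₀ T₁, V t = C ⟨U t, hUdom t ht⟩)
    (hVdom : ∀ t ∈ Set.Icc T₀ T₁, V t ∈ C.adjoint.domain)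
    (W : ℝ → H) (hWcont : ContinuousOn W (Set.Icc T₀ T₁))
    (hWC : ∀ t, ∀ ht : t ∈ Set.Icc T₀ T₁, W t = C.adjoint ⟨V t, hVdom t ht⟩)
    (heq : ∀ t ∈ Set.Icc T₀ T₁, η (U' t) + W t = 0) :
    1 / 2 * ⟪U T₁, η (U T₁)⟫_ℝ + ∫ t in T₀..T₁, ‖V t‖ ^ 2 =
      1 / 2 * ⟪U T₀, η (U T₀)⟫_ℝ :=
  statement9_general η hη_sa C hC_dense T₀ T₁ hT U U' hUderiv hUdom V hVcont hVC hVdom W hWC heq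
end

section
/- Let U₀, U₁, U₂ ∈ H be pairwise orthogonal with U₀ ∈ D(C), U₁ ∈ N(C), U₂ ∈ N(C), and set U := U₀ + U₁ + U₂ (so U ∈ D(C) and C U = C U₀). Assume P U₁ = U₁, ⟨U₁, P U₂⟩ = 0, ‖U₀‖ ≤ k₀ ‖C U₀‖, and ‖U₂‖ ≤ k₁ ‖P U₂‖. Then ‖U‖² ≤ max{2, 2 k₁², k₀² (1 + 2 max{1, k₁²})} · (‖C U‖² + ‖P U‖²); equivalently, ‖P U‖² + ‖C U‖² ≥ c_* ‖U‖² with c_* = 1 / max{2, 2 k₁², k₀² (1 + 2 max{1, k₁²})}. -/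
open scoped InnerProductSpace

/-!
Write `U = U₀ + U₁ + U₂`. By orthogonality `‖U‖² = ‖U₀‖² + ‖U₁‖² + ‖U₂‖²`, and `C U = C U₀`
controls `‖U₀‖`. Since `P U = P U₀ + (U₁ + P U₂)` with `U₁ ⊥ P U₂` and `‖P U₀‖ ≤ ‖U₀‖`,
the triangle inequality gives `‖U₁‖² + ‖P U₂‖² ≤ 2 ‖P U‖² + 2 ‖U₀‖²`, which controls `‖U₁‖`
and, through `‖U₂‖ ≤ k₁ ‖P U₂‖`, also `‖U₂‖`.
-/

theorem LinearPMap.apply_add_of_apply_eq_zero {R E F : Type*} [Ring R] [AddCommGroup E]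
    [Module R E] [AddCommGroup F] [Module R F] (f : E →ₗ.[R] F) {x y : E}
    (hx : x ∈ f.domain) (hy : y ∈ f.domain) (hfy : f ⟨y, hy⟩ = 0) :
    f ⟨x + y, add_mem hx hy⟩ = f ⟨x, hx⟩ := by
  rw [show (⟨x + y, add_mem hx hy⟩ : f.domain) = ⟨x, hx⟩ + ⟨y, hy⟩ from rfl, f.map_add, hfy,
    add_zero]

theorem norm_sq_add_norm_sq_le_of_inner_eq_zero {F : Type*} [NormedAddCommGroup F]
    [InnerProductSpace ℝ F] {x y : F} (h : ⟪x, y⟫_ℝ = 0) (z : F) :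
    ‖x‖ ^ 2 + ‖y‖ ^ 2 ≤ 2 * ‖z + (x + y)‖ ^ 2 + 2 * ‖z‖ ^ 2 := by
  have htri : ‖x + y‖ ≤ ‖z + (x + y)‖ + ‖z‖ := by
    simpa using norm_sub_le (z + (x + y)) z
  have hpyth : ‖x + y‖ ^ 2 = ‖x‖ ^ 2 + ‖y‖ ^ 2 := by rw [norm_add_sq_real, h]; ring
  nlinarith [norm_nonneg (x + y), sq_nonneg (‖z + (x + y)‖ - ‖z‖)]

theorem add_add_le_max_mul_add {k₀ k₁ a b c p q s : ℝ} (hb : 0 ≤ b) (hp : 0 ≤ p) (hq : 0 ≤ q)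
    (hs : 0 ≤ s) (ha : a ≤ k₀ ^ 2 * s) (hc : c ≤ k₁ ^ 2 * q) (hbq : b + q ≤ 2 * p + 2 * a) :
    a + b + c ≤ max (max 2 (2 * k₁ ^ 2)) (k₀ ^ 2 * (1 + 2 * max 1 (k₁ ^ 2))) * (s + p) := by
  set m := max 1 (k₁ ^ 2)
  have hm1 : 1 ≤ m := le_max_left _ _
  have hmk : k₁ ^ 2 ≤ m := le_max_right _ _
  have hmM : 2 * m ≤ max (max 2 (2 * k₁ ^ 2)) (k₀ ^ 2 * (1 + 2 * m)) :=
    le_max_of_le_left (by rcases max_choice 1 (k₁ ^ 2) with h | h <;> simp [m, h])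
  calc a + b + c ≤ a + m * (b + q) := by nlinarith
    _ ≤ (1 + 2 * m) * a + 2 * m * p := by nlinarith
    _ ≤ k₀ ^ 2 * (1 + 2 * m) * s + 2 * m * p := by nlinarith
    _ ≤ _ := by nlinarith [le_max_right (max 2 (2 * k₁ ^ 2)) (k₀ ^ 2 * (1 + 2 * m))]

theorem statement11_general {H X : Type*}
    [NormedAddCommGroup H] [InnerProductSpace ℝ H]
    [NormedAddCommGroup X] [InnerProductSpace ℝ X]
    (C : H →ₗ.[ℝ] X)
    (K : Submodule ℝ H) [K.HasOrthogonalProjection]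
    (k₀ k₁ : ℝ)
    (U₀ U₁ U₂ : H)
    -- pairwise orthogonality
    (h01 : ⟪U₀, U₁⟫_ℝ = 0) (h02 : ⟪U₀, U₂⟫_ℝ = 0) (h12 : ⟪U₁, U₂⟫_ℝ = 0)
    -- membership: `U₀ ∈ D(C)`, `U₁, U₂ ∈ N(C)`
    (hU₀dom : U₀ ∈ C.domain)
    (hU₁dom : U₁ ∈ C.domain) (hU₁ker : C ⟨U₁, hU₁dom⟩ = 0)
    (hU₂dom : U₂ ∈ C.domain) (hU₂ker : C ⟨U₂, hU₂dom⟩ = 0)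
    -- `P U₁ = U₁`, `⟪U₁, P U₂⟫ = 0`
    (hPU₁ : ((K.orthogonalProjectionOnto U₁ : ↥K) : H) = U₁)
    (h1P2 : ⟪U₁, ((K.orthogonalProjectionOnto U₂ : ↥K) : H)⟫_ℝ = 0)
    -- the two basic estimates
    (hk₀ : ‖U₀‖ ≤ k₀ * ‖C ⟨U₀, hU₀dom⟩‖)
    (hk₁ : ‖U₂‖ ≤ k₁ * ‖((K.orthogonalProjectionOnto U₂ : ↥K) : H)‖) :
    -- conclusion: `U = U₀ + U₁ + U₂ ∈ D(C)`, `C U = C U₀`, and the norm estimate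
    ∃ hU : U₀ + U₁ + U₂ ∈ C.domain,
      C ⟨U₀ + U₁ + U₂, hU⟩ = C ⟨U₀, hU₀dom⟩ ∧
      ‖U₀ + U₁ + U₂‖ ^ 2 ≤
        max (max 2 (2 * k₁ ^ 2)) (k₀ ^ 2 * (1 + 2 * max 1 (k₁ ^ 2))) *
          (‖C ⟨U₀ + U₁ + U₂, hU⟩‖ ^ 2 +
            ‖((K.orthogonalProjectionOnto (U₀ + U₁ + U₂) : ↥K) : H)‖ ^ 2) := by
  have hCU : C ⟨U₀ + U₁ + U₂, add_mem (add_mem hU₀dom hU₁dom) hU₂dom⟩ = C ⟨U₀, hU₀dom⟩ := by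
    rw [C.apply_add_of_apply_eq_zero (add_mem hU₀dom hU₁dom) hU₂dom hU₂ker,
      C.apply_add_of_apply_eq_zero hU₀dom hU₁dom hU₁ker]
  refine ⟨_, hCU, ?_⟩
  set P₀ : H := ↑(K.orthogonalProjectionOnto U₀)
  set P₂ : H := ↑(K.orthogonalProjectionOnto U₂)
  have hPU : (K.orthogonalProjectionOnto (U₀ + U₁ + U₂) : H) = P₀ + (U₁ + P₂) := by
    simp only [map_add, Submodule.coe_add, hPU₁, P₀, P₂, add_assoc]
  have hnormU : ‖U₀ + U₁ + U₂‖ ^ 2 = ‖U₀‖ ^ 2 + ‖U₁‖ ^ 2 + ‖U₂‖ ^ 2 := by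
    rw [norm_add_sq_real, inner_add_left, h02, h12, norm_add_sq_real, h01]
    ring
  have hU₁P₂ : ‖U₁‖ ^ 2 + ‖P₂‖ ^ 2 ≤ 2 * ‖P₀ + (U₁ + P₂)‖ ^ 2 + 2 * ‖U₀‖ ^ 2 := by
    have hP₀ : ‖P₀‖ ≤ ‖U₀‖ := K.norm_orthogonalProjectionOnto_apply_le U₀
    nlinarith [norm_sq_add_norm_sq_le_of_inner_eq_zero h1P2 P₀, norm_nonneg P₀]
  rw [hCU, hPU, hnormU]
  refine add_add_le_max_mul_add (sq_nonneg _) (sq_nonneg _) (sq_nonneg _) (sq_nonneg _)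
    ?_ ?_ hU₁P₂
  · rw [← mul_pow]; exact pow_le_pow_left₀ (norm_nonneg _) hk₀ 2
  · rw [← mul_pow]; exact pow_le_pow_left₀ (norm_nonneg _) hk₁ 2

theorem statement11 {H X : Type*}
    [NormedAddCommGroup H] [InnerProductSpace ℝ H] [CompleteSpace H]
    [NormedAddCommGroup X] [InnerProductSpace ℝ X]
    (C : H →ₗ.[ℝ] X)
    (K : Submodule ℝ H) (hK : IsClosed (K : Set H)) [K.HasOrthogonalProjection]
    (k₀ k₁ : ℝ) (hk₀0 : 0 ≤ k₀) (hk₁0 : 0 ≤ k₁)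
    (U₀ U₁ U₂ : H)
    -- pairwise orthogonality
    (h01 : ⟪U₀, U₁⟫_ℝ = 0) (h02 : ⟪U₀, U₂⟫_ℝ = 0) (h12 : ⟪U₁, U₂⟫_ℝ = 0)
    -- membership: `U₀ ∈ D(C)`, `U₁, U₂ ∈ N(C)`
    (hU₀dom : U₀ ∈ C.domain)
    (hU₁dom : U₁ ∈ C.domain) (hU₁ker : C ⟨U₁, hU₁dom⟩ = 0)
    (hU₂dom : U₂ ∈ C.domain) (hU₂ker : C ⟨U₂, hU₂dom⟩ = 0)
    -- `P U₁ = U₁`, `⟪U₁, P U₂⟫ = 0`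
    (hPU₁ : ((K.orthogonalProjectionOnto U₁ : ↥K) : H) = U₁)
    (h1P2 : ⟪U₁, ((K.orthogonalProjectionOnto U₂ : ↥K) : H)⟫_ℝ = 0)
    -- the two basic estimates
    (hk₀ : ‖U₀‖ ≤ k₀ * ‖C ⟨U₀, hU₀dom⟩‖)
    (hk₁ : ‖U₂‖ ≤ k₁ * ‖((K.orthogonalProjectionOnto U₂ : ↥K) : H)‖) :
    -- conclusion: `U = U₀ + U₁ + U₂ ∈ D(C)`, `C U = C U₀`, and the norm estimate
    ∃ hU : U₀ + U₁ + U₂ ∈ C.domain,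
      C ⟨U₀ + U₁ + U₂, hU⟩ = C ⟨U₀, hU₀dom⟩ ∧
      ‖U₀ + U₁ + U₂‖ ^ 2 ≤
        max (max 2 (2 * k₁ ^ 2)) (k₀ ^ 2 * (1 + 2 * max 1 (k₁ ^ 2))) *
          (‖C ⟨U₀ + U₁ + U₂, hU⟩‖ ^ 2 +
            ‖((K.orthogonalProjectionOnto (U₀ + U₁ + U₂) : ↥K) : H)‖ ^ 2) :=
  statement11_general C K k₀ k₁ U₀ U₁ U₂ h01 h02 h12 hU₀dom hU₁dom hU₁ker hU₂dom hU₂ker hPU₁ h1P2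
    hk₀ hk₁
end
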